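/- For every Λ ≥ 1/4, one has ∫₀^{arctan(1/Λ)} (cos t)ⁿ (1 − Λ tan t)ⁿ dt ≥ (5/(27Λ))·(9/10)^{2n} for every integer n ≥ 1. -/

import Mathlib

/-!
On `[0, arctan (1 / Λ)]` the integrand equals `(cos t - Λ sin t) ^ n`, and `cos t ≥ 1 - t² / 2`,
`sin t ≤ t` give, for `Λ ≥ 1 / 4`, the minorant
`1 - Λ t - t² / 2 ≥ 1 - Λ t - 35 Λ² t² / 4 = (1 - 7 Λ t / 2) (1 + 5 Λ t / 2)`,
whose roots are rational multiples of `1 / Λ`. On `[0, c]`, `c = 2 / (7 Λ)`, Bernoulli's inequality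
bounds its `n`-th power below by `(1 - y) ^ n (1 + 5 n y / 7)` with `y = t / c`, which integrates
explicitly to `c` times a rational function of `n` of order `1 / n`; this dominates
`(81 / 100) ^ n`.
-/

open Real

theorem cos_pos_of_le_arctan {x t : ℝ} (ht₀ : 0 ≤ t) (ht : t ≤ arctan x) : 0 < cos t :=
  cos_pos_of_mem_Ioo ⟨by linarith [pi_pos], ht.trans_lt (arctan_lt_pi_div_two x)⟩

theorem tan_le_of_le_arctan {x t : ℝ} (ht₀ : 0 ≤ t) (ht : t ≤ arctan x) : tan t ≤ x := by
  have hmem : ∀ {s}, 0 ≤ s → s ≤ arctan x → s ∈ Set.Ioo (-(π / 2)) (π / 2) := fun h₀ h =>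
    ⟨by linarith [pi_pos], h.trans_lt (arctan_lt_pi_div_two x)⟩
  simpa [tan_arctan] using
    strictMonoOn_tan.monotoneOn (hmem ht₀ ht) (hmem (ht₀.trans ht) le_rfl) ht

theorem cos_pow_mul_one_sub_tan_pow {Λ t : ℝ} (ht : cos t ≠ 0) (n : ℕ) :
    cos t ^ n * (1 - Λ * tan t) ^ n = (cos t - Λ * sin t) ^ n := by
  rw [← mul_pow, tan_eq_sin_div_cos]
  congr 1
  field_simp

theorem cos_sub_mul_sin_nonneg_of_le_arctan {Λ t : ℝ} (hΛ : 0 < Λ) (ht₀ : 0 ≤ t)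
    (ht : t ≤ arctan (1 / Λ)) : 0 ≤ cos t - Λ * sin t := by
  have hcos := cos_pos_of_le_arctan ht₀ ht
  have htan := tan_le_of_le_arctan ht₀ ht
  rw [tan_eq_sin_div_cos, div_le_div_iff₀ hcos hΛ] at htan
  linarith

theorem quadratic_le_cos_sub_mul_sin {Λ t : ℝ} (hΛ : 1 / 4 ≤ Λ) (ht : 0 ≤ t) :
    (1 - 7 / 2 * Λ * t) * (1 + 5 / 2 * Λ * t) ≤ cos t - Λ * sin t := by
  have hcos := one_sub_sq_div_two_le_cos (x := t)
  have hsin := mul_le_mul_of_nonneg_left (sin_le ht) (by linarith : 0 ≤ Λ)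
  nlinarith [sq_nonneg t, mul_nonneg (sq_nonneg t) (by nlinarith : 0 ≤ Λ ^ 2 - 2 / 35)]

theorem two_div_le_arctan_inv {Λ : ℝ} (hΛ : 1 / 4 ≤ Λ) : 2 / (7 * Λ) ≤ arctan (1 / Λ) := by
  have hΛ₀ : 0 < Λ := by linarith
  set c := 2 / (7 * Λ) with hc
  have hc₀ : 0 < c := by positivity
  have hcπ : c < π / 2 := by
    have : c ≤ 8 / 7 := by rw [hc, div_le_iff₀ (by positivity)]; linarith
    linarith [pi_gt_three]
  have hcos : 0 < cos c := cos_pos_of_mem_Ioo ⟨by linarith, hcπ⟩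
  have hroot : (1 - 7 / 2 * Λ * c) * (1 + 5 / 2 * Λ * c) = 0 := by
    rw [hc]; field_simp; ring
  have hsin : Λ * sin c ≤ cos c := by
    linarith [quadratic_le_cos_sub_mul_sin hΛ hc₀.le]
  have htan : tan c ≤ 1 / Λ := by
    rw [tan_eq_sin_div_cos, div_le_div_iff₀ hcos hΛ₀]; linarith
  simpa [arctan_tan (by linarith) hcπ] using arctan_le_arctan_iff.mpr htan

theorem bernoulli_le_cos_sub_mul_sin_pow {Λ t : ℝ} (hΛ : 1 / 4 ≤ Λ) (ht₀ : 0 ≤ t)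
    (ht : t ≤ 2 / (7 * Λ)) (n : ℕ) :
    (1 - t / (2 / (7 * Λ))) ^ n * (1 + 5 * n / 7 * (t / (2 / (7 * Λ)))) ≤
      (cos t - Λ * sin t) ^ n := by
  have hΛ₀ : 0 < Λ := by linarith
  have hx : t / (2 / (7 * Λ)) = 7 / 2 * Λ * t := by field_simp
  have hx1 : 7 / 2 * Λ * t ≤ 1 := by
    rw [le_div_iff₀ (by positivity)] at ht; linarith
  rw [hx]
  have hfac : 0 ≤ 1 - 7 / 2 * Λ * t := by linarith
  calc (1 - 7 / 2 * Λ * t) ^ n * (1 + 5 * n / 7 * (7 / 2 * Λ * t))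
      = (1 - 7 / 2 * Λ * t) ^ n * (1 + n * (5 / 2 * Λ * t)) := by ring
    _ ≤ (1 - 7 / 2 * Λ * t) ^ n * (1 + 5 / 2 * Λ * t) ^ n := by
        gcongr
        exact one_add_mul_le_pow (by nlinarith) n
    _ = ((1 - 7 / 2 * Λ * t) * (1 + 5 / 2 * Λ * t)) ^ n := (mul_pow _ _ _).symm
    _ ≤ (cos t - Λ * sin t) ^ n := by
        gcongr
        exact quadratic_le_cos_sub_mul_sin hΛ ht₀

theorem integral_one_sub_pow_mul_one_add (m : ℝ) (n : ℕ) :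
    ∫ y in (0 : ℝ)..1, (1 - y) ^ n * (1 + m * y) = (1 + m) / (n + 1) - m / (n + 2) := by
  have hsplit : ∀ y : ℝ,
      (1 - y) ^ n * (1 + m * y) = (1 + m) * (1 - y) ^ n - m * (1 - y) ^ (n + 1) := fun y => by ring
  simp_rw [hsplit]
  rw [intervalIntegral.integral_sub ((by fun_prop : Continuous _).intervalIntegrable _ _)
    ((by fun_prop : Continuous _).intervalIntegrable _ _), intervalIntegral.integral_const_mul,
    intervalIntegral.integral_const_mul, intervalIntegral.integral_comp_sub_left (fun y => y ^ n),
    intervalIntegral.integral_comp_sub_left (fun y => y ^ (n + 1)), integral_pow, integral_pow]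
  push_cast
  ring

theorem pow_le_bernoulli_integral (n : ℕ) :
    5 / 27 * (81 / 100 : ℝ) ^ n ≤ 2 / 7 * ((1 + 5 * n / 7) / (n + 1) - 5 * n / 7 / (n + 2)) := by
  suffices h : 5 / 27 * (81 / 100 : ℝ) ^ n * ((n + 1) * (n + 2)) ≤ 2 / 7 * (n + 2 + 5 * n / 7) by
    have hrhs : (1 + 5 * n / 7) / (n + 1) - 5 * n / 7 / (n + 2) =
        (n + 2 + 5 * n / 7 : ℝ) / ((n + 1) * (n + 2)) := by
      field_simp; ring
    rwa [hrhs, mul_div_assoc', le_div_iff₀ (by positivity)]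
  rcases lt_or_ge n 3 with hn | hn
  · interval_cases n <;> norm_num
  induction n, hn using Nat.le_induction with
  | base => norm_num
  | succ m hm ih =>
    have hm' : (3 : ℝ) ≤ m := by exact_mod_cast hm
    have hq : (0 : ℝ) ≤ (81 / 100) ^ m := by positivity
    push_cast
    rw [pow_succ]
    nlinarith [mul_le_mul_of_nonneg_left ih (by positivity : (0 : ℝ) ≤ 81 / 100 * (m + 3))]

theorem stmt_5_general (Λ : ℝ) (hΛ : 1 / 4 ≤ Λ) (n : ℕ) :
    (5 / (27 * Λ)) * (9 / 10 : ℝ) ^ (2 * n) ≤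
      ∫ t in (0 : ℝ)..(Real.arctan (1 / Λ)),
        (Real.cos t) ^ n * (1 - Λ * Real.tan t) ^ n := by
  have hΛ₀ : 0 < Λ := by linarith
  set c := 2 / (7 * Λ) with hc
  have hc₀ : 0 < c := by positivity
  have hca : c ≤ arctan (1 / Λ) := two_div_le_arctan_inv hΛ
  have hg : Continuous fun t => (cos t - Λ * sin t) ^ n := by fun_prop
  rw [intervalIntegral.integral_congr (g := fun t => (cos t - Λ * sin t) ^ n) fun t ht => by
    rw [Set.uIcc_of_le (hc₀.le.trans hca)] at ht
    exact cos_pow_mul_one_sub_tan_pow (cos_pos_of_le_arctan ht.1 ht.2).ne' n]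
  calc 5 / (27 * Λ) * (9 / 10 : ℝ) ^ (2 * n) = 5 / 27 * (81 / 100) ^ n / Λ := by
        rw [pow_mul]; field_simp; norm_num
    _ ≤ 2 / 7 * ((1 + 5 * n / 7) / (n + 1) - 5 * n / 7 / (n + 2)) / Λ :=
        div_le_div_of_nonneg_right (pow_le_bernoulli_integral n) hΛ₀.le
    _ = ∫ t in (0 : ℝ)..c, (1 - t / c) ^ n * (1 + 5 * n / 7 * (t / c)) := by
        rw [intervalIntegral.integral_comp_div (fun y => (1 - y) ^ n * (1 + 5 * n / 7 * y)) hc₀.ne',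
          zero_div, div_self hc₀.ne', integral_one_sub_pow_mul_one_add, smul_eq_mul, hc]
        field_simp
    _ ≤ ∫ t in (0 : ℝ)..c, (cos t - Λ * sin t) ^ n :=
        intervalIntegral.integral_mono_on hc₀.le
          ((by fun_prop : Continuous _).intervalIntegrable _ _) (hg.intervalIntegrable _ _)
          fun t ht => bernoulli_le_cos_sub_mul_sin_pow hΛ ht.1 ht.2 n
    _ ≤ ∫ t in (0 : ℝ)..arctan (1 / Λ), (cos t - Λ * sin t) ^ n := by
        refine intervalIntegral.integral_mono_interval le_rfl hc₀.le hca ?_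
          (hg.intervalIntegrable _ _)
        filter_upwards [MeasureTheory.ae_restrict_mem measurableSet_Ioc] with t ht
        exact pow_nonneg (cos_sub_mul_sin_nonneg_of_le_arctan hΛ₀ ht.1.le ht.2) n

theorem stmt_5 (Λ : ℝ) (hΛ : 1 / 4 ≤ Λ) (n : ℕ) (hn : 1 ≤ n) :
    (5 / (27 * Λ)) * (9 / 10 : ℝ) ^ (2 * n) ≤
      ∫ t in (0 : ℝ)..(Real.arctan (1 / Λ)),
        (Real.cos t) ^ n * (1 - Λ * Real.tan t) ^ n :=
  stmt_5_general Λ hΛ n
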